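/- Let Ω ⊆ ℝ³ be open, u : Ω → ℝ³ smooth and divergence-free, p : Ω → ℝ smooth, and α ∈ ℝ. Suppose (u, p, ϱ) is a solution of the decoupled system: −Δu + ∇p = ϱ and ϱ + α u·∇ϱ = ∇·(L(u) − Re·u⊗u − α p (∇u)ᵀ), where L(u) = α (∇u)ᵀ(∇u + (∇u)ᵀ) + (α + α₂)(∇u + (∇u)ᵀ)². Then, setting π = p + α u·∇p, the pair (u, π) satisfies the second-grade fluid equation −Δu − α u·∇Δu + Re·u·∇u + ∇π = ∇·L(u). -/

import Mathlib

/-- Partial derivative in direction `i` of a scalar field on `ℝ³`. -/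
noncomputable def pd (i : Fin 3) (f : (Fin 3 → ℝ) → ℝ) (x : Fin 3 → ℝ) : ℝ :=
  fderiv ℝ f x (Pi.single i 1)

/-- `(i,j)` entry of `L(u) = α (∇u)ᵀ(∇u + (∇u)ᵀ) + (α+α₂)(∇u + (∇u)ᵀ)²`,
where `(∇u)ᵢⱼ = ∂ⱼuᵢ`. -/
noncomputable def Lmat (α α₂ : ℝ) (u : Fin 3 → (Fin 3 → ℝ) → ℝ)
    (i j : Fin 3) (x : Fin 3 → ℝ) : ℝ :=
  α * ∑ k, pd i (u k) x * (pd j (u k) x + pd k (u j) x)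
    + (α + α₂) * ∑ k, (pd k (u i) x + pd i (u k) x) * (pd j (u k) x + pd k (u j) x)

section helpers
variable {f g : (Fin 3 → ℝ) → ℝ} {x : Fin 3 → ℝ} {i j : Fin 3}

lemma pd_congr {Ω : Set (Fin 3 → ℝ)} (hΩ : IsOpen Ω) (h : ∀ y ∈ Ω, f y = g y)
    (hx : x ∈ Ω) : pd i f x = pd i g x := by
  unfold pd
  rw [Filter.EventuallyEq.fderiv_eq (Filter.eventuallyEq_of_mem (hΩ.mem_nhds hx) h)]

lemma pd_zero : pd i (fun _ => (0:ℝ)) x = 0 := by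
  unfold pd; simp

lemma pd_add (hf : DifferentiableAt ℝ f x) (hg : DifferentiableAt ℝ g x) :
    pd i (fun y => f y + g y) x = pd i f x + pd i g x := by
  unfold pd; rw [fderiv_fun_add hf hg]; simp

lemma pd_sub (hf : DifferentiableAt ℝ f x) (hg : DifferentiableAt ℝ g x) :
    pd i (fun y => f y - g y) x = pd i f x - pd i g x := by
  unfold pd; rw [fderiv_fun_sub hf hg]; simp

lemma pd_const_mul (c : ℝ) (hf : DifferentiableAt ℝ f x) :
    pd i (fun y => c * f y) x = c * pd i f x := by
  unfold pd; rw [fderiv_const_mul hf]; simp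

lemma pd_mul (hf : DifferentiableAt ℝ f x) (hg : DifferentiableAt ℝ g x) :
    pd i (fun y => f y * g y) x = f x * pd i g x + g x * pd i f x := by
  unfold pd; rw [fderiv_fun_mul hf hg]; simp

lemma pd_sum {s : Finset (Fin 3)} {F : Fin 3 → (Fin 3 → ℝ) → ℝ}
    (h : ∀ j ∈ s, DifferentiableAt ℝ (F j) x) :
    pd i (fun y => ∑ j ∈ s, F j y) x = ∑ j ∈ s, pd i (F j) x := by
  unfold pd; rw [fderiv_fun_sum h]; simp

lemma contDiff_pd (hf : ContDiff ℝ (⊤ : ℕ∞) f) : ContDiff ℝ (⊤ : ℕ∞) (pd i f) := by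
  have h := hf.fderiv_right (m := (⊤ : ℕ∞)) (by simp)
  exact h.clm_apply contDiff_const

lemma pd_comm (hf : ContDiff ℝ (⊤ : ℕ∞) f) : pd i (pd j f) x = pd j (pd i f) x := by
  have hsymm : IsSymmSndFDerivAt ℝ f x :=
    hf.contDiffAt.isSymmSndFDerivAt (by rw [minSmoothness_of_isRCLikeNormedField]; exact WithTop.coe_le_coe.mpr le_top)
  have hfd : Differentiable ℝ (fderiv ℝ f) :=
    (hf.fderiv_right (m := (⊤ : ℕ∞)) (by simp)).differentiable (by simp)
  have hd : ∀ k l : Fin 3, pd k (pd l f) x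
      = fderiv ℝ (fderiv ℝ f) x (Pi.single k 1) (Pi.single l 1) := by
    intro k l
    show fderiv ℝ (fun y => fderiv ℝ f y (Pi.single l 1)) x (Pi.single k 1) = _
    rw [fderiv_clm_apply (hfd x) (differentiableAt_const _)]
    simp
  rw [hd, hd, hsymm]

end helpers

set_option maxHeartbeats 2000000 in
/-- If `(u, p, ϱ)` solves the decoupled system (Stokes-like + transport), then
`(u, π)` with `π = p + α u·∇p` solves the second-grade fluid equation. -/
theorem stmt3 (Ω : Set (Fin 3 → ℝ)) (hΩ : IsOpen Ω)
    (u : Fin 3 → (Fin 3 → ℝ) → ℝ) (p : (Fin 3 → ℝ) → ℝ)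
    (ϱ : Fin 3 → (Fin 3 → ℝ) → ℝ) (α α₂ Re : ℝ)
    (hu : ∀ i, ContDiff ℝ (⊤ : ℕ∞) (u i)) (hp : ContDiff ℝ (⊤ : ℕ∞) p)
    (hϱ : ∀ i, ContDiff ℝ (⊤ : ℕ∞) (ϱ i))
    (hdiv : ∀ x ∈ Ω, (∑ j, pd j (u j) x) = 0)
    (hstokes : ∀ x ∈ Ω, ∀ i : Fin 3,
      -(∑ j, pd j (pd j (u i)) x) + pd i p x = ϱ i x)
    (htrans : ∀ x ∈ Ω, ∀ i : Fin 3,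
      ϱ i x + α * ∑ j, u j x * pd j (ϱ i) x
        = ∑ j, pd j (fun y =>
            Lmat α α₂ u i j y - Re * (u i y * u j y) - α * p y * pd i (u j) y) x) :
    ∀ x ∈ Ω, ∀ i : Fin 3,
      -(∑ j, pd j (pd j (u i)) x)
        - α * ∑ j, u j x * pd j (fun y => ∑ k, pd k (pd k (u i)) y) x
        + Re * ∑ j, u j x * pd j (u i) x
        + pd i (fun y => p y + α * ∑ j, u j y * pd j p y) x
      = ∑ j, pd j (fun y => Lmat α α₂ u i j y) x := by
  intro x hx i
  -- differentiability facts
  have du : ∀ k, DifferentiableAt ℝ (u k) x := fun k => ((hu k).differentiable (by simp)) x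
  have dp : DifferentiableAt ℝ p x := (hp.differentiable (by simp)) x
  have hpdu : ∀ k l : Fin 3, ContDiff ℝ (⊤ : ℕ∞) (pd k (u l)) := fun k l => contDiff_pd (hu l)
  have dpdu : ∀ k l : Fin 3, DifferentiableAt ℝ (pd k (u l)) x :=
    fun k l => ((hpdu k l).differentiable (by simp)) x
  have dpdp : ∀ k : Fin 3, DifferentiableAt ℝ (pd k p) x :=
    fun k => ((contDiff_pd hp).differentiable (by simp)) x
  have hΔU : ContDiff ℝ (⊤ : ℕ∞) (fun y => ∑ k, pd k (pd k (u i)) y) :=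
    ContDiff.sum fun k _ => contDiff_pd (contDiff_pd (hu i))
  have dΔU : DifferentiableAt ℝ (fun y => ∑ k, pd k (pd k (u i)) y) x :=
    (hΔU.differentiable (by simp)) x
  have hL : ∀ j, ContDiff ℝ (⊤ : ℕ∞) (fun y => Lmat α α₂ u i j y) := by
    intro j
    unfold Lmat
    exact (contDiff_const.mul (ContDiff.sum fun k _ =>
        (hpdu i k).mul ((hpdu j k).add (hpdu k j)))).add
      (contDiff_const.mul (ContDiff.sum fun k _ =>
        ((hpdu k i).add (hpdu i k)).mul ((hpdu j k).add (hpdu k j))))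
  have dL : ∀ j, DifferentiableAt ℝ (fun y => Lmat α α₂ u i j y) x :=
    fun j => ((hL j).differentiable (by simp)) x
  -- derivative of ϱ i via the Stokes relation
  have hstokes' : ∀ y ∈ Ω, ϱ i y = pd i p y - ∑ k, pd k (pd k (u i)) y := by
    intro y hy
    have := hstokes y hy i
    linarith
  have hDϱ : ∀ j : Fin 3, pd j (ϱ i) x
      = pd i (pd j p) x - pd j (fun y => ∑ k, pd k (pd k (u i)) y) x := by
    intro j
    rw [pd_congr hΩ hstokes' hx, pd_sub (dpdp i) dΔU, pd_comm hp]
  -- expand the transport RHS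
  have hRHS : ∀ j : Fin 3,
      pd j (fun y => Lmat α α₂ u i j y - Re * (u i y * u j y)
        - α * p y * pd i (u j) y) x
      = pd j (fun y => Lmat α α₂ u i j y) x
        - Re * (u i x * pd j (u j) x + u j x * pd j (u i) x)
        - ((α * p x) * pd j (pd i (u j)) x + pd i (u j) x * (α * pd j p x)) := by
    intro j
    rw [pd_sub ((dL j).fun_sub (((du i).fun_mul (du j)).const_mul Re)) ((dp.const_mul α).fun_mul (dpdu i j)),
      pd_sub (dL j) (((du i).fun_mul (du j)).const_mul Re),
      pd_const_mul Re ((du i).fun_mul (du j)),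
      pd_mul (du i) (du j),
      pd_mul (dp.const_mul α) (dpdu i j),
      pd_const_mul α dp]
  -- the divergence-derived identities
  have hdivx := hdiv x hx
  have hC : (∑ j, pd j (pd i (u j)) x) = 0 := by
    have h1 : ∀ j : Fin 3, pd j (pd i (u j)) x = pd i (pd j (u j)) x := fun j => pd_comm (hu j)
    calc (∑ j, pd j (pd i (u j)) x) = ∑ j, pd i (pd j (u j)) x := by simp only [h1]
      _ = pd i (fun y => ∑ j, pd j (u j) y) x :=
          (pd_sum (fun j _ => (contDiff_pd (hu j)).differentiable (by simp) x)).symm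
      _ = pd i (fun _ => (0:ℝ)) x := pd_congr hΩ hdiv hx
      _ = 0 := pd_zero
  -- expand the goal pressure term
  have dS : DifferentiableAt ℝ (fun y => ∑ j, u j y * pd j p y) x :=
    ((ContDiff.sum fun j (_ : j ∈ Finset.univ) =>
      (hu j).mul (contDiff_pd hp)).differentiable (by simp)) x
  have hGoal : pd i (fun y => p y + α * ∑ j, u j y * pd j p y) x
      = pd i p x + α * ∑ j, (u j x * pd i (pd j p) x + pd j p x * pd i (u j) x) := by
    have hsummand : ∀ j : Fin 3, pd i (fun y => u j y * pd j p y) x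
        = u j x * pd i (pd j p) x + pd j p x * pd i (u j) x :=
      fun j => pd_mul (du j) (dpdp j)
    rw [pd_add dp (dS.const_mul α), pd_const_mul α dS,
      pd_sum (fun j _ => (du j).fun_mul (dpdp j))]
    simp only [hsummand]
  -- assemble
  have hE := htrans x hx i
  rw [← hstokes x hx i] at hE
  simp only [hDϱ, hRHS] at hE
  rw [hGoal]
  simp only [Fin.sum_univ_three] at hE hdivx hC ⊢
  linear_combination hE - Re * u i x * hdivx - α * p x * hC
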